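/- Let 0 < H < 1/2, T > 0, and r := 1/(2H). The covariance function R(s,t) = ½(s^{2H} + t^{2H} − |t−s|^{2H}) of fractional Brownian motion on [0,T] has finite two-dimensional r-variation; more precisely, for any partitions {s_0 = 0 < s_1 < … < s_M = T} and {t_0 = 0 < … < t_N = T}, one has Σ_{i=1}^{M} Σ_{j=1}^{N} |Δ_{ij}R|^r ≤ 5T, where Δ_{ij}R = R(s_i,t_j) − R(s_{i-1},t_j) − R(s_i,t_{j-1}) + R(s_{i-1},t_{j-1}). Consequently ‖R‖_{r}^{(2D)} ≤ (5T)^{2H}. -/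

import Mathlib

/-!
Fix a row `[a, b]` of the grid and put `p = 2H ≤ 1`, `K = (b - a) ^ p`. The increment of `fbmR H`
over `[a, b] × [c, d]` is half the increment over `[c, d]` of `ψ u = |u - a| ^ p - |u - b| ^ p`.
By concavity of `x ↦ x ^ p`, `ψ` decreases on `(-∞, a]`, increases on `[a, b]` and decreases on
`[b, ∞)`, from `ψ a = -K` to `ψ b = K`, and it is `≤ 0` left of `a` and `≥ 0` right of `b`. Hence
`|ψ| ≤ K` and `ψ` has variation at most `4K` on any interval, so along the row every increment is at
most `K` and their sum is at most `2K`. As `r = 1/p ≥ 1`, the sum of their `r`-th powers is at most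
`K ^ (r - 1) · 2K = 2 (b - a)`, and summing over the rows gives `2T ≤ 5T`.
-/

/-- The covariance function of fractional Brownian motion with Hurst parameter `H`. -/
noncomputable def fbmR (H s t : ℝ) : ℝ :=
  (1/2) * (s ^ (2*H) + t ^ (2*H) - |t - s| ^ (2*H))

/-- The rectangular increment of a two-variable function. -/
noncomputable def rectInc (R : ℝ → ℝ → ℝ) (a b c d : ℝ) : ℝ :=
  R b d - R a d - R b c + R a c

open Set

theorem Fin.sum_univ_succ_sub_castSucc {G : Type*} [AddCommGroup G] {N : ℕ}
    (f : Fin (N + 1) → G) :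
    ∑ j : Fin N, (f j.succ - f j.castSucc) = f (Fin.last N) - f 0 := by
  induction N with
  | zero => simp
  | succ N ih =>
    rw [Fin.sum_univ_castSucc]
    simp only [Fin.succ_castSucc]
    rw [ih (fun j => f j.castSucc), Fin.succ_last, Fin.castSucc_zero]
    abel

theorem ConcaveOn.antitoneOn_add_sub {f : ℝ → ℝ} {c δ : ℝ} (hf : ConcaveOn ℝ (Ici c) f)
    (hδ : 0 ≤ δ) : AntitoneOn (fun x => f (x + δ) - f x) (Ici c) := by
  rcases hδ.eq_or_lt with rfl | hδ
  · simpa using antitoneOn_const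
  intro x hx y hy hxy
  have hmem {z : ℝ} (hz : z ∈ Ici c) : z + δ ∈ Ici c := mem_Ici.2 (by linarith [mem_Ici.1 hz])
  have hxy' : x < y + δ := by linarith
  have h₁ : slope f x (y + δ) ≤ slope f x (x + δ) :=
    hf.slope_anti hx ⟨hmem hx, (lt_add_of_pos_right x hδ).ne'⟩ ⟨hmem hy, hxy'.ne'⟩ (by linarith)
  have h₂ : slope f (y + δ) y ≤ slope f (y + δ) x :=
    hf.slope_anti (hmem hy) ⟨hx, hxy'.ne⟩ ⟨hy, (lt_add_of_pos_right y hδ).ne⟩ hxy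
  rw [slope_comm f (y + δ), slope_comm f (y + δ)] at h₂
  have h := h₂.trans h₁
  rwa [slope_def_field, slope_def_field, add_sub_cancel_left, add_sub_cancel_left,
    div_le_div_iff_of_pos_right hδ] at h

theorem Real.rpow_add_sub_rpow_antitoneOn {p δ : ℝ} (hp0 : 0 ≤ p) (hp1 : p ≤ 1) (hδ : 0 ≤ δ) :
    AntitoneOn (fun x : ℝ => (x + δ) ^ p - x ^ p) (Ici 0) :=
  (Real.concaveOn_rpow hp0 hp1).antitoneOn_add_sub hδ

theorem eVariationOn_neg {α E : Type*} [LinearOrder α] [SeminormedAddCommGroup E] (f : α → E)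
    (s : Set α) : eVariationOn (-f) s = eVariationOn f s := by
  simp only [eVariationOn, Pi.neg_apply, edist_neg_neg]

theorem AntitoneOn.eVariationOn_eq {α : Type*} [LinearOrder α] {f : α → ℝ} {s : Set α} {a b : α}
    (hf : AntitoneOn f s) (as : a ∈ s) (bs : b ∈ s) :
    eVariationOn f (s ∩ Icc a b) = .ofReal (f a - f b) := by
  have h : eVariationOn (-f) (s ∩ Icc a b) = .ofReal (-f b - -f a) :=
    hf.neg.eVariationOn_eq as bs
  rwa [eVariationOn_neg, neg_sub_neg] at h

theorem sum_edist_le_eVariationOn {α E : Type*} [LinearOrder α] [PseudoEMetricSpace E]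
    {f : α → E} {s : Set α} {N : ℕ} {t : Fin (N + 1) → α} (ht : Monotone t) (hts : ∀ j, t j ∈ s) :
    ∑ j : Fin N, edist (f (t j.succ)) (f (t j.castSucc)) ≤ eVariationOn f s := by
  have hclamp (j : Fin N) (k : ℕ) (hk : k ≤ j + 1) : Fin.clamp k N = ⟨k, by omega⟩ :=
    Fin.ext (min_eq_left (by omega))
  calc ∑ j : Fin N, edist (f (t j.succ)) (f (t j.castSucc))
      = ∑ i ∈ Finset.range N, edist (f (t (Fin.clamp (i + 1) N))) (f (t (Fin.clamp i N))) := by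
        rw [← Fin.sum_univ_eq_sum_range]
        refine Finset.sum_congr rfl fun j _ => ?_
        rw [hclamp j _ le_rfl, hclamp j _ (by omega)]
        rfl
    _ ≤ eVariationOn f s := eVariationOn.sum_le (ht.comp Fin.clamp_monotone) fun _ => hts _

theorem sum_abs_sub_le_of_eVariationOn_le {s : Set ℝ} {f : ℝ → ℝ} {N : ℕ} {t : Fin (N + 1) → ℝ}
    (ht : Monotone t) (hts : ∀ j, t j ∈ s) {V : ℝ} (hV0 : 0 ≤ V)
    (hV : eVariationOn f s ≤ .ofReal V) :
    ∑ j : Fin N, |f (t j.succ) - f (t j.castSucc)| ≤ V := by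
  have := (sum_edist_le_eVariationOn (f := f) ht hts).trans hV
  simp only [edist_dist, Real.dist_eq] at this
  rwa [← ENNReal.ofReal_sum_of_nonneg (fun _ _ => abs_nonneg _),
    ENNReal.ofReal_le_ofReal_iff hV0] at this

theorem Finset.sum_rpow_le_of_sum_le {ι : Type*} (s : Finset ι) {x : ι → ℝ} {K C r : ℝ}
    (hK : 0 < K) (hr : 1 ≤ r) (hx0 : ∀ i ∈ s, 0 ≤ x i) (hxK : ∀ i ∈ s, x i ≤ K)
    (hsum : ∑ i ∈ s, x i ≤ C * K) : ∑ i ∈ s, x i ^ r ≤ C * K ^ r := by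
  have hKr : 0 < K ^ r := Real.rpow_pos_of_pos hK r
  calc ∑ i ∈ s, x i ^ r = ∑ i ∈ s, K ^ r * (x i / K) ^ r := by
        refine Finset.sum_congr rfl fun i hi => ?_
        rw [Real.div_rpow (hx0 i hi) hK.le, mul_div_cancel₀ _ hKr.ne']
    _ ≤ ∑ i ∈ s, K ^ r * (x i / K) := by
        refine Finset.sum_le_sum fun i hi => mul_le_mul_of_nonneg_left ?_ hKr.le
        exact Real.rpow_le_self_of_le_one (div_nonneg (hx0 i hi) hK.le)
          ((div_le_one hK).2 (hxK i hi)) hr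
    _ = K ^ r / K * ∑ i ∈ s, x i := by
        rw [Finset.mul_sum]
        exact Finset.sum_congr rfl fun i _ => by ring
    _ ≤ K ^ r / K * (C * K) := by gcongr
    _ = C * K ^ r := by field_simp

noncomputable def distPowDiff (p a b u : ℝ) : ℝ := |u - a| ^ p - |u - b| ^ p

lemma rectInc_fbmR (H a b c d : ℝ) :
    rectInc (fbmR H) a b c d = (distPowDiff (2 * H) a b d - distPowDiff (2 * H) a b c) / 2 := by
  simp only [rectInc, fbmR, distPowDiff, abs_sub_comm]
  ring

namespace distPowDiff

variable {p a b : ℝ}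

lemma eq_of_le_left (hab : a ≤ b) {u : ℝ} (hu : u ≤ a) :
    distPowDiff p a b u = (a - u) ^ p - (a - u + (b - a)) ^ p := by
  rw [distPowDiff, abs_of_nonpos (by linarith), abs_of_nonpos (by linarith)]
  ring_nf

lemma eq_of_right_le (hab : a ≤ b) {u : ℝ} (hu : b ≤ u) :
    distPowDiff p a b u = (u - b + (b - a)) ^ p - (u - b) ^ p := by
  rw [distPowDiff, abs_of_nonneg (by linarith), abs_of_nonneg (by linarith)]
  ring_nf

lemma apply_left (hp : 0 < p) (hab : a ≤ b) : distPowDiff p a b a = -(b - a) ^ p := by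
  simp [distPowDiff, Real.zero_rpow hp.ne', abs_of_nonpos (sub_nonpos.2 hab)]

lemma apply_right (hp : 0 < p) (hab : a ≤ b) : distPowDiff p a b b = (b - a) ^ p := by
  simp [distPowDiff, Real.zero_rpow hp.ne', abs_of_nonneg (sub_nonneg.2 hab)]

lemma nonpos_of_le_left (hp : 0 ≤ p) (hab : a ≤ b) {u : ℝ} (hu : u ≤ a) :
    distPowDiff p a b u ≤ 0 := by
  rw [eq_of_le_left hab hu, sub_nonpos]
  exact Real.rpow_le_rpow (by linarith) (by linarith) hp

lemma nonneg_of_right_le (hp : 0 ≤ p) (hab : a ≤ b) {u : ℝ} (hu : b ≤ u) :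
    0 ≤ distPowDiff p a b u := by
  rw [eq_of_right_le hab hu, sub_nonneg]
  exact Real.rpow_le_rpow (by linarith) (by linarith) hp

lemma monotoneOn_Icc (hp : 0 ≤ p) : MonotoneOn (distPowDiff p a b) (Icc a b) := by
  rintro u ⟨hau, hub⟩ v ⟨hav, hvb⟩ huv
  rw [distPowDiff, distPowDiff, abs_of_nonneg (sub_nonneg.2 hau),
    abs_of_nonneg (sub_nonneg.2 hav), abs_of_nonpos (sub_nonpos.2 hub),
    abs_of_nonpos (sub_nonpos.2 hvb)]
  gcongr; linarith

lemma antitoneOn_Iic (hp0 : 0 ≤ p) (hp1 : p ≤ 1) (hab : a ≤ b) :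
    AntitoneOn (distPowDiff p a b) (Iic a) := by
  intro u hu v hv huv
  rw [eq_of_le_left hab hu, eq_of_le_left hab hv]
  have := Real.rpow_add_sub_rpow_antitoneOn hp0 hp1 (sub_nonneg.2 hab)
    (mem_Ici.2 (sub_nonneg.2 (mem_Iic.1 hv))) (mem_Ici.2 (sub_nonneg.2 (mem_Iic.1 hu)))
    (by linarith)
  linarith

lemma antitoneOn_Ici (hp0 : 0 ≤ p) (hp1 : p ≤ 1) (hab : a ≤ b) :
    AntitoneOn (distPowDiff p a b) (Ici b) := by
  intro u hu v hv huv
  rw [eq_of_right_le hab hu, eq_of_right_le hab hv]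
  exact Real.rpow_add_sub_rpow_antitoneOn hp0 hp1 (sub_nonneg.2 hab)
    (mem_Ici.2 (sub_nonneg.2 (mem_Ici.1 hu))) (mem_Ici.2 (sub_nonneg.2 (mem_Ici.1 hv)))
    (by linarith)

lemma abs_apply_le (hp : 0 < p) (hp1 : p ≤ 1) (hab : a ≤ b) (u : ℝ) :
    |distPowDiff p a b u| ≤ (b - a) ^ p := by
  rw [abs_le]
  rcases le_total u a with hua | hau
  · have := antitoneOn_Iic hp.le hp1 hab hua self_mem_Iic hua
    rw [apply_left hp hab] at this
    exact ⟨this, (nonpos_of_le_left hp.le hab hua).trans (by positivity)⟩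
  rcases le_total u b with hub | hbu
  · have h₁ := monotoneOn_Icc hp.le ⟨le_rfl, hab⟩ ⟨hau, hub⟩ hau
    have h₂ := monotoneOn_Icc hp.le ⟨hau, hub⟩ ⟨hab, le_rfl⟩ hub
    rw [apply_left hp hab] at h₁
    rw [apply_right hp hab] at h₂
    exact ⟨h₁, h₂⟩
  · have := antitoneOn_Ici hp.le hp1 hab self_mem_Ici hbu hbu
    rw [apply_right hp hab] at this
    exact ⟨(neg_nonpos.2 (by positivity)).trans (nonneg_of_right_le hp.le hab hbu), this⟩

end distPowDiff

lemma eVariationOn_distPowDiff_le {p a b c e : ℝ} (hp : 0 < p) (hp1 : p ≤ 1)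
    (hca : c ≤ a) (hab : a ≤ b) (hbe : b ≤ e) :
    eVariationOn (distPowDiff p a b) (Icc c e) ≤ .ofReal (4 * (b - a) ^ p) := by
  set ψ := distPowDiff p a b
  set K := (b - a) ^ p
  have hK : 0 ≤ K := by positivity
  have hψa : ψ a = -K := distPowDiff.apply_left hp hab
  have hψb : ψ b = K := distPowDiff.apply_right hp hab
  have hleft : eVariationOn ψ (Icc c a) ≤ .ofReal K := calc
    _ ≤ eVariationOn ψ (Iic a ∩ Icc c a) :=
      eVariationOn.mono _ (subset_inter Icc_subset_Iic_self subset_rfl)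
    _ = .ofReal (ψ c - ψ a) :=
      (distPowDiff.antitoneOn_Iic hp.le hp1 hab).eVariationOn_eq hca self_mem_Iic
    _ ≤ .ofReal K := by
      gcongr
      linarith [distPowDiff.nonpos_of_le_left hp.le hab hca]
  have hmid : eVariationOn ψ (Icc a b) = .ofReal (2 * K) := by
    rw [← inter_self (Icc a b), (distPowDiff.monotoneOn_Icc hp.le).eVariationOn_eq
      (left_mem_Icc.2 hab) (right_mem_Icc.2 hab)]
    exact congrArg ENNReal.ofReal (by linarith)
  have hright : eVariationOn ψ (Icc b e) ≤ .ofReal K := calc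
    _ ≤ eVariationOn ψ (Ici b ∩ Icc b e) :=
      eVariationOn.mono _ (subset_inter Icc_subset_Ici_self subset_rfl)
    _ = .ofReal (ψ b - ψ e) :=
      (distPowDiff.antitoneOn_Ici hp.le hp1 hab).eVariationOn_eq self_mem_Ici hbe
    _ ≤ .ofReal K := by
      gcongr
      linarith [distPowDiff.nonneg_of_right_le hp.le hab hbe]
  have hsplit := eVariationOn.Icc_add_Icc ψ hca (hab.trans hbe) (mem_univ a)
  rw [← eVariationOn.Icc_add_Icc ψ hab hbe (mem_univ b)] at hsplit
  simp only [univ_inter] at hsplit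
  rw [← hsplit, hmid]
  calc _ ≤ ENNReal.ofReal K + (.ofReal (2 * K) + .ofReal K) := by gcongr
    _ = .ofReal (4 * K) := by
      rw [← ENNReal.ofReal_add (by positivity) hK, ← ENNReal.ofReal_add hK (by positivity)]
      ring_nf

lemma sum_abs_rectInc_fbmR_rpow_le {H a b : ℝ} (hH0 : 0 < H) (hH : H ≤ 1 / 2) (hab : a < b)
    {N : ℕ} {t : Fin (N + 1) → ℝ} (ht : Monotone t) (hta : t 0 ≤ a)
    (htb : b ≤ t (Fin.last N)) :
    ∑ j : Fin N, |rectInc (fbmR H) a b (t j.castSucc) (t j.succ)| ^ (1 / (2 * H))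
      ≤ 2 * (b - a) := by
  have hp : 0 < 2 * H := by positivity
  have hp1 : 2 * H ≤ 1 := by linarith
  set K := (b - a) ^ (2 * H)
  have hK : 0 < K := Real.rpow_pos_of_pos (sub_pos.2 hab) _
  have hKr : K ^ (1 / (2 * H)) = b - a := by
    rw [← Real.rpow_mul (sub_pos.2 hab).le, mul_one_div_cancel hp.ne', Real.rpow_one]
  simp only [rectInc_fbmR, abs_div, abs_two]
  rw [← hKr]
  refine Finset.sum_rpow_le_of_sum_le _ hK ((one_le_div hp).2 hp1) (fun _ _ => by positivity)
    (fun j _ => ?_) ?_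
  · rw [div_le_iff₀ two_pos]
    have hc := distPowDiff.abs_apply_le hp hp1 hab.le (t j.castSucc)
    have hd := distPowDiff.abs_apply_le hp hp1 hab.le (t j.succ)
    linarith [abs_sub (distPowDiff (2 * H) a b (t j.succ))
      (distPowDiff (2 * H) a b (t j.castSucc))]
  · rw [← Finset.sum_div, div_le_iff₀ two_pos]
    have hvar := sum_abs_sub_le_of_eVariationOn_le (s := Icc (t 0) (t (Fin.last N))) ht
      (fun j => ⟨ht (Fin.zero_le j), ht (Fin.le_last j)⟩) (by positivity)
      (eVariationOn_distPowDiff_le hp hp1 hta hab.le htb)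
    linarith

theorem fbmR_finite_2D_r_variation_general (H T : ℝ) (hH0 : 0 < H) (hH : H < 1/2)
    (r : ℝ) (hr : r = 1/(2*H))
    (M N : ℕ) (s : Fin (M+1) → ℝ) (t : Fin (N+1) → ℝ)
    (hs : StrictMono s) (hs0 : s 0 = 0) (hsM : s (Fin.last M) = T)
    (ht : StrictMono t) (ht0 : t 0 = 0) (htN : t (Fin.last N) = T) :
    (∑ i : Fin M, ∑ j : Fin N,
        |rectInc (fbmR H) (s i.castSucc) (s i.succ) (t j.castSucc) (t j.succ)| ^ r
      ≤ 5 * T) ∧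
    (∑ i : Fin M, ∑ j : Fin N,
        |rectInc (fbmR H) (s i.castSucc) (s i.succ) (t j.castSucc) (t j.succ)| ^ r) ^ (1/r)
      ≤ (5 * T) ^ (2*H) := by
  subst hr
  have hT : 0 ≤ T := hsM ▸ hs0 ▸ hs.monotone (Fin.zero_le _)
  have hrow (i : Fin M) : ∑ j : Fin N,
      |rectInc (fbmR H) (s i.castSucc) (s i.succ) (t j.castSucc) (t j.succ)| ^ (1 / (2 * H))
        ≤ 2 * (s i.succ - s i.castSucc) :=
    sum_abs_rectInc_fbmR_rpow_le hH0 hH.le (hs Fin.castSucc_lt_succ) ht.monotone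
      (ht0 ▸ hs0 ▸ hs.monotone (Fin.zero_le _)) (htN ▸ hsM ▸ hs.monotone (Fin.le_last _))
  have hsum : ∑ i : Fin M, ∑ j : Fin N,
      |rectInc (fbmR H) (s i.castSucc) (s i.succ) (t j.castSucc) (t j.succ)| ^ (1 / (2 * H))
        ≤ 5 * T := calc
    _ ≤ ∑ i : Fin M, 2 * (s i.succ - s i.castSucc) := Finset.sum_le_sum fun i _ => hrow i
    _ = 2 * T := by rw [← Finset.mul_sum, Fin.sum_univ_succ_sub_castSucc, hsM, hs0, sub_zero]
    _ ≤ 5 * T := by linarith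
  refine ⟨hsum, ?_⟩
  rw [one_div_one_div]
  exact Real.rpow_le_rpow (by positivity) hsum (by positivity)

theorem fbmR_finite_2D_r_variation (H T : ℝ) (hH0 : 0 < H) (hH : H < 1/2) (hT : 0 < T)
    (r : ℝ) (hr : r = 1/(2*H))
    (M N : ℕ) (s : Fin (M+1) → ℝ) (t : Fin (N+1) → ℝ)
    (hs : StrictMono s) (hs0 : s 0 = 0) (hsM : s (Fin.last M) = T)
    (ht : StrictMono t) (ht0 : t 0 = 0) (htN : t (Fin.last N) = T) :
    (∑ i : Fin M, ∑ j : Fin N,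
        |rectInc (fbmR H) (s i.castSucc) (s i.succ) (t j.castSucc) (t j.succ)| ^ r
      ≤ 5 * T) ∧
    (∑ i : Fin M, ∑ j : Fin N,
        |rectInc (fbmR H) (s i.castSucc) (s i.succ) (t j.castSucc) (t j.succ)| ^ r) ^ (1/r)
      ≤ (5 * T) ^ (2*H) :=
  fbmR_finite_2D_r_variation_general H T hH0 hH r hr M N s t hs hs0 hsM ht ht0 htN
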